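/- Let F be an algebraically closed field of characteristic p > 0, let M be a function field over F, and let t ∈ M be transcendental over F and not a p-th power in M (so M/F(t) is separable). Let D : M → M be an F-linear derivation of M with D(t) = 1 (the derivation with respect to t). Let v be a prime of M that is unramified over F(t) and satisfies v(t) ≥ 0. Then for every x ∈ M with v(x) ≥ 0 and D(x) ≠ 0, one has v(D(x)) ≥ max(0, v(x) − 1). -/

import Mathlib

/-- A prime of a function field `M` over a constant field `F`: a surjective additive
valuation `M → ℤ` that is trivial on `F`. -/
structure FFPrime (F M : Type*) [Field F] [Field M] [Algebra F M] where
  v : M → ℤ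
  map_mul : ∀ x y : M, x ≠ 0 → y ≠ 0 → v (x * y) = v x + v y
  add_min : ∀ x y : M, x ≠ 0 → y ≠ 0 → x + y ≠ 0 → min (v x) (v y) ≤ v (x + y)
  surj : ∀ n : ℤ, ∃ x : M, x ≠ 0 ∧ v x = n
  triv : ∀ c : F, c ≠ 0 → v (algebraMap F M c) = 0

/-- A prime of `M` is unramified over `F(t)` if some nonzero element of `F(t)` has
valuation `1`. -/
def FFPrime.UnramifiedOver {F M : Type*} [Field F] [Field M] [Algebra F M]
    (P : FFPrime F M) (t : M) : Prop :=
  ∃ r : M, r ∈ IntermediateField.adjoin F {t} ∧ r ≠ 0 ∧ P.v r = 1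

/-!
Shifting `t` by a constant gives a uniformizer `π = t - a` at `P`: as `v t ≥ 0`, all
`v (t - b)` are nonnegative and at most one is positive, so by factoring numerator and
denominator into linear factors `t - b`, every valuation on `F(t)` is a multiple of that one,
which must therefore be `1`.

Since `F` is perfect, `F(t) = F(t)^p(t)`, so `[F(t) : F(t)^p] = p`; Frobenius maps the finite
extension `M / F(t)` isomorphically onto `M^p / F(t)^p`, hence also `[M : M^p] = p` and
`1, π, …, π^(p-1)` is a basis of `M` over `M^p`. Writing `x = ∑ wᵢ^p πⁱ`, the terms have
valuations `p v(wᵢ) + i`, pairwise distinct, so `v x` is their minimum, and `v x ≥ 0` forces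
`v wᵢ ≥ 0`. As `D` kills `p`-th powers and `D π = 1`, `π D x = ∑ i wᵢ^p πⁱ`, whose valuation is
the minimum over the same terms with `i = 0` removed: it is at least `v x` and at least `1`.
-/

open Polynomial IntermediateField Module

section Derivation

variable {R A : Type*} [CommSemiring R] [CommRing A] [Algebra R A]

def derivationOfLeibniz (D : A → A) (hadd : ∀ x y, D (x + y) = D x + D y)
    (hlin : ∀ (c : R) (x : A), D (algebraMap R A c * x) = algebraMap R A c * D x)
    (hmul : ∀ x y, D (x * y) = x * D y + y * D x) : Derivation R A A :=
  Derivation.mk' { toFun := D, map_add' := hadd,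
                   map_smul' := fun c x => by simpa [Algebra.smul_def] using hlin c x }
    hmul

theorem Derivation.map_pow_char (δ : Derivation R A A) (p : ℕ) [CharP A p] (a : A) :
    δ (a ^ p) = 0 := by
  rw [δ.leibniz_pow, nsmul_eq_mul, CharP.cast_eq_zero, zero_mul]

theorem Derivation.mul_map_sum_mul_pow (δ : Derivation R A A) {π : A} (hπ : δ π = 1)
    (s : Finset ℕ) {c : ℕ → A} (hc : ∀ i ∈ s, δ (c i) = 0) :
    π * δ (∑ i ∈ s, c i * π ^ i) = ∑ i ∈ s, (i : A) * c i * π ^ i := by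
  rw [map_sum, Finset.mul_sum]
  refine Finset.sum_congr rfl fun i hi => ?_
  rw [δ.leibniz, δ.leibniz_pow, hc i hi, hπ, smul_zero, add_zero, smul_eq_mul, nsmul_eq_mul,
    smul_eq_mul, mul_one]
  cases i with
  | zero => simp
  | succ n => rw [Nat.add_sub_cancel, pow_succ]; ring

end Derivation

section PBasis

variable (p : ℕ) [hp : Fact p.Prime]

theorem minpoly_eq_X_pow_sub_C_of_notMem_range {k E : Type*} [Field k] [Field E] [Algebra k E]
    [CharP E p] {π : E} (a : k) (ha : algebraMap k E a = π ^ p)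
    (hπ : π ∉ Set.range (algebraMap k E)) :
    minpoly k π = X ^ p - C a := by
  have hmonic : (X ^ p - C a).Monic := monic_X_pow_sub_C a hp.out.ne_zero
  have hroot : aeval π (X ^ p - C a) = 0 := by simp [ha]
  refine (minpoly.eq_of_irreducible_of_monic ?_ hroot hmonic).symm
  refine X_pow_sub_C_irreducible_of_prime hp.out fun b hb => hπ ⟨b, frobenius_inj E p ?_⟩
  rw [frobenius_def, frobenius_def, ← map_pow, hb, ha]

theorem finrank_adjoin_eq_of_notMem_range {k E : Type*} [Field k] [Field E] [Algebra k E]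
    [CharP E p] {π : E} (a : k) (ha : algebraMap k E a = π ^ p)
    (hπ : π ∉ Set.range (algebraMap k E)) :
    finrank k k⟮π⟯ = p := by
  have hint : IsIntegral k π := .of_pow hp.out.pos (ha ▸ isIntegral_algebraMap)
  rw [adjoin.finrank hint, minpoly_eq_X_pow_sub_C_of_notMem_range p a ha hπ,
    natDegree_X_pow_sub_C]

variable {M : Type*} [Field M] [CharP M p]

theorem Subfield.map_frobenius_le (K : Subfield M) : K.map (frobenius M p) ≤ K := by
  rintro _ ⟨y, hy, rfl⟩
  exact pow_mem hy p

theorem relfinrank_map_frobenius_adjoin (F : Type*) [Field F] [Algebra F M] [CharP F p]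
    [PerfectRing F p] {t : M} (ht : ¬∃ c, c ^ p = t) :
    (F⟮t⟯.toSubfield.map (frobenius M p)).relfinrank F⟮t⟯.toSubfield = p := by
  set K := F⟮t⟯.toSubfield
  set Kp := K.map (frobenius M p)
  have hle : Kp ≤ K := K.map_frobenius_le p
  have htK : t ∈ K := mem_adjoin_simple_self F t
  have hext : Subfield.extendScalars hle = Kp⟮t⟯ := by
    refine le_antisymm ?_ (adjoin_simple_le_iff.2 htK)
    show F⟮t⟯.toSubfield ≤ (Kp⟮t⟯).toSubfield
    rw [adjoin_toSubfield, adjoin_toSubfield]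
    refine Subfield.closure_mono (Set.union_subset_union_left _ ?_)
    rintro _ ⟨c, rfl⟩
    obtain ⟨d, rfl⟩ := surjective_frobenius F p c
    exact ⟨⟨_, _, IntermediateField.algebraMap_mem F⟮t⟯ d, rfl⟩,
      ((algebraMap F M).map_frobenius p d).symm⟩
  rw [Subfield.relfinrank_eq_finrank_of_le hle, hext]
  refine finrank_adjoin_eq_of_notMem_range p ⟨t ^ p, t, htK, rfl⟩ rfl ?_
  rintro ⟨y, hy⟩
  obtain ⟨c, -, hc⟩ := y.2
  exact ht ⟨c, hc.trans hy⟩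

theorem finrank_fieldRange_frobenius (F : Type*) [Field F] [Algebra F M] [CharP F p]
    [PerfectRing F p] {t : M} (ht : ¬∃ c, c ^ p = t) [FiniteDimensional F⟮t⟯ M] :
    finrank (frobenius M p).fieldRange M = p := by
  set K := F⟮t⟯.toSubfield
  set φ := frobenius M p
  have hK : K.relfinrank ⊤ ≠ 0 := by
    rw [Subfield.relfinrank_top_right]
    exact finrank_pos.ne'
  have hKM := Subfield.relfinrank_mul_relfinrank (K.map_frobenius_le p) (le_top : K ≤ ⊤)
  have hKpMp := Subfield.relfinrank_mul_relfinrank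
    ((Subfield.gc_map_comap φ).monotone_l (le_top : K ≤ ⊤)) (le_top : (⊤ : Subfield M).map φ ≤ ⊤)
  rw [relfinrank_map_frobenius_adjoin p F ht] at hKM
  rw [Subfield.relfinrank_map_map, ← hKM, mul_comm p] at hKpMp
  rw [RingHom.fieldRange_eq_map, ← Subfield.relfinrank_top_right]
  exact Nat.eq_of_mul_eq_mul_left (Nat.pos_of_ne_zero hK) hKpMp

theorem exists_eq_sum_pow_mul_pow (h : finrank (frobenius M p).fieldRange M = p) {π : M}
    (hπ : ¬∃ c, c ^ p = π) (x : M) :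
    ∃ w : ℕ → M, x = ∑ i ∈ Finset.range p, w i ^ p * π ^ i := by
  set Mp := (frobenius M p).fieldRange
  have hπMp : π ∉ Set.range (algebraMap Mp M) := by
    rintro ⟨y, hy⟩
    obtain ⟨c, hc⟩ := y.2
    exact hπ ⟨c, hc.trans hy⟩
  let a : Mp := ⟨π ^ p, π, rfl⟩
  have hmin := minpoly_eq_X_pow_sub_C_of_notMem_range p a rfl hπMp
  have hint : IsIntegral Mp π := .of_pow hp.out.pos (isIntegral_algebraMap (x := a))
  have : FiniteDimensional Mp M := Module.finite_of_finrank_pos (h ▸ hp.out.pos)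
  have htop : Mp⟮π⟯ = ⊤ := eq_of_le_of_finrank_eq le_top <| by
    rw [finrank_top', h, adjoin.finrank hint, hmin, natDegree_X_pow_sub_C]
  set pb := adjoin.powerBasis hint
  obtain ⟨f, hdeg, hf⟩ := pb.exists_eq_aeval ⟨x, htop ▸ mem_top⟩
  rw [adjoin.powerBasis_dim, hmin, natDegree_X_pow_sub_C] at hdeg
  have hx : x = aeval π f := by
    simpa [pb, adjoin.powerBasis_gen] using congrArg Subtype.val hf
  choose w hw using fun i => (f.coeff i).2
  refine ⟨w, hx.trans ?_⟩
  rw [aeval_eq_sum_range' hdeg]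
  refine Finset.sum_congr rfl fun i _ => ?_
  rw [Algebra.smul_def, ← frobenius_def p, hw i]
  rfl

theorem not_exists_pow_eq_sub_algebraMap {F : Type*} [Field F] [Algebra F M] [CharP F p]
    [PerfectRing F p] {t : M} (ht : ¬∃ c, c ^ p = t) (a : F) :
    ¬∃ c, c ^ p = t - algebraMap F M a := by
  rintro ⟨c, hc⟩
  obtain ⟨b, rfl⟩ := surjective_frobenius F p a
  refine ht ⟨c + algebraMap F M b, ?_⟩
  rw [add_pow_char, hc, frobenius_def, map_pow, sub_add_cancel]

end PBasis

theorem eq_of_add_eq_add_of_dvd {p : ℕ} {a b : ℤ} {i j : ℕ} (ha : (p : ℤ) ∣ a)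
    (hb : (p : ℤ) ∣ b) (hi : i < p) (hj : j < p) (h : a + i = b + j) : i = j := by
  obtain ⟨a, rfl⟩ := ha
  obtain ⟨b, rfl⟩ := hb
  have := congrArg (· % (p : ℤ)) h
  simp only [Int.mul_add_emod_self_left] at this
  rw [Int.emod_eq_of_lt (by positivity) (by omega),
    Int.emod_eq_of_lt (by positivity) (by omega)] at this
  omega

theorem Transcendental.sub_algebraMap_ne_zero {F M : Type*} [Field F] [Field M] [Algebra F M]
    {t : M} (ht : Transcendental F t) (b : F) : t - algebraMap F M b ≠ 0 := by
  intro h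
  rw [sub_eq_zero] at h
  exact ht (h ▸ isAlgebraic_algebraMap b)

namespace FFPrime

variable {F M : Type*} [Field F] [Field M] [Algebra F M] (P : FFPrime F M)

theorem v_one : P.v 1 = 0 := by
  have := P.map_mul 1 1 one_ne_zero one_ne_zero
  rw [one_mul] at this
  omega

theorem v_pow {x : M} (hx : x ≠ 0) (n : ℕ) : P.v (x ^ n) = n * P.v x := by
  induction n with
  | zero => simp [P.v_one]
  | succ n ih =>
    rw [pow_succ, P.map_mul _ _ (pow_ne_zero n hx) hx, ih]
    push_cast
    ring

theorem v_div {x y : M} (hx : x ≠ 0) (hy : y ≠ 0) : P.v (x / y) = P.v x - P.v y := by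
  have := P.map_mul (x / y) y (div_ne_zero hx hy) hy
  rw [div_mul_cancel₀ x hy] at this
  omega

theorem v_neg {x : M} (hx : x ≠ 0) : P.v (-x) = P.v x := by
  have hv : P.v (-1) = 0 := by simpa using P.triv (-1) (by norm_num)
  rw [← neg_one_mul, P.map_mul _ _ (by norm_num) hx, hv, zero_add]

theorem v_natCast {n : ℕ} (hn : (n : M) ≠ 0) : P.v n = 0 := by
  rw [← map_natCast (algebraMap F M)] at hn ⊢
  exact P.triv _ fun h => hn (by rw [h, map_zero])

theorem add_ne_zero_of_v_ne {x y : M} (hx : x ≠ 0) (h : P.v x ≠ P.v y) : x + y ≠ 0 := by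
  intro hxy
  rw [add_eq_zero_iff_eq_neg'] at hxy
  rw [hxy, P.v_neg hx] at h
  exact h rfl

theorem v_add_eq_min_of_ne {x y : M} (hx : x ≠ 0) (hy : y ≠ 0) (h : P.v x ≠ P.v y) :
    P.v (x + y) = min (P.v x) (P.v y) := by
  wlog hlt : P.v x < P.v y generalizing x y
  · rw [add_comm, min_comm]
    exact this hy hx h.symm (lt_of_le_of_ne (not_lt.1 hlt) h.symm)
  have hxy := P.add_ne_zero_of_v_ne hx h
  have hge := P.add_min x y hx hy hxy
  have hle := P.add_min (x + y) (-y) hxy (neg_ne_zero.2 hy) (by simpa using hx)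
  rw [add_neg_cancel_right, P.v_neg hy] at hle
  omega

theorem v_sum_eq_inf' {ι : Type*} {s : Finset ι} (hs : s.Nonempty) {f : ι → M}
    (hf : ∀ i ∈ s, f i ≠ 0) (hinj : Set.InjOn (P.v ∘ f) s) :
    ∑ i ∈ s, f i ≠ 0 ∧ P.v (∑ i ∈ s, f i) = s.inf' hs (P.v ∘ f) := by
  induction hs using Finset.Nonempty.cons_induction with
  | singleton a => simpa using hf a (Finset.mem_singleton_self a)
  | cons a s ha hs ih =>
    obtain ⟨hsum, hv⟩ := ih (fun i hi => hf i (Finset.mem_cons_of_mem hi))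
      (hinj.mono (Finset.subset_cons ha))
    obtain ⟨j, hj, hjmin⟩ := Finset.exists_mem_eq_inf' hs (P.v ∘ f)
    have hne : P.v (f a) ≠ P.v (∑ i ∈ s, f i) := by
      rw [hv, hjmin]
      intro h
      exact ha (hinj (Finset.mem_cons_self a s) (Finset.mem_cons_of_mem hj) h ▸ hj)
    have hfa := hf a (Finset.mem_cons_self a s)
    rw [Finset.sum_cons, Finset.inf'_cons hs, P.v_add_eq_min_of_ne hfa hsum hne, hv]
    exact ⟨P.add_ne_zero_of_v_ne hfa hne, rfl⟩

theorem v_multiset_prod {s : Multiset M} (hs : ∀ x ∈ s, x ≠ 0) :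
    P.v s.prod = (s.map P.v).sum := by
  induction s using Multiset.induction_on with
  | empty => simp [P.v_one]
  | cons a s ih =>
    have hs' : ∀ x ∈ s, x ≠ 0 := fun x hx => hs x (Multiset.mem_cons_of_mem hx)
    rw [Multiset.prod_cons, Multiset.map_cons, Multiset.sum_cons,
      P.map_mul _ _ (hs a (Multiset.mem_cons_self a s)) (Multiset.prod_ne_zero fun h => hs' 0 h rfl),
      ih hs']

theorem exists_v_sum_mul_pow_eq (p : ℕ) {π : M} (hπ0 : π ≠ 0) (hπ : P.v π = 1) {c : ℕ → M}
    (hc : ∀ i < p, c i ≠ 0 → (p : ℤ) ∣ P.v (c i))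
    (hsum : ∑ i ∈ Finset.range p, c i * π ^ i ≠ 0) :
    ∃ j < p, c j ≠ 0 ∧ P.v (∑ i ∈ Finset.range p, c i * π ^ i) = P.v (c j) + j ∧
      ∀ i < p, c i ≠ 0 → P.v (c j) + j ≤ P.v (c i) + i := by
  classical
  set S := (Finset.range p).filter fun i => c i * π ^ i ≠ 0
  have hmem {i : ℕ} : i ∈ S ↔ i < p ∧ c i ≠ 0 := by simp [S, hπ0]
  have hv {i : ℕ} (hi : c i ≠ 0) : P.v (c i * π ^ i) = P.v (c i) + i := by
    rw [P.map_mul _ _ hi (pow_ne_zero i hπ0), P.v_pow hπ0, hπ, mul_one]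
  have hS : ∑ i ∈ S, c i * π ^ i = ∑ i ∈ Finset.range p, c i * π ^ i :=
    Finset.sum_filter_ne_zero _
  have hne : S.Nonempty := by
    rw [Finset.nonempty_iff_ne_empty]
    rintro h
    rw [← hS, h, Finset.sum_empty] at hsum
    exact hsum rfl
  have hinj : Set.InjOn (P.v ∘ fun i => c i * π ^ i) S := by
    intro i hi j hj h
    rw [Finset.mem_coe, hmem] at hi hj
    simp only [Function.comp_apply, hv hi.2, hv hj.2] at h
    exact eq_of_add_eq_add_of_dvd (hc i hi.1 hi.2) (hc j hj.1 hj.2) hi.1 hj.1 h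
  obtain ⟨-, hval⟩ := P.v_sum_eq_inf' hne (fun i hi => (Finset.mem_filter.1 hi).2) hinj
  obtain ⟨j, hj, hjmin⟩ := Finset.exists_mem_eq_inf' hne (P.v ∘ fun i => c i * π ^ i)
  rw [hmem] at hj
  refine ⟨j, hj.1, hj.2, ?_, fun i hi hci => ?_⟩
  · rw [← hS, hval, hjmin, Function.comp_apply, hv hj.2]
  · rw [← hv hj.2, ← hv hci]
    have := Finset.inf'_le (P.v ∘ fun i => c i * π ^ i) (hmem.2 ⟨hi, hci⟩)
    rwa [hjmin] at this

theorem max_le_v_of_mul_eq_sum (p : ℕ) {π : M} (hπ0 : π ≠ 0) (hπ : P.v π = 1) {c : ℕ → M}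
    (hc : ∀ i < p, c i ≠ 0 → (p : ℤ) ∣ P.v (c i)) {x y : M}
    (hx : x = ∑ i ∈ Finset.range p, c i * π ^ i)
    (hy : π * y = ∑ i ∈ Finset.range p, (i : M) * c i * π ^ i)
    (hx0 : x ≠ 0) (hy0 : y ≠ 0) (hvx : 0 ≤ P.v x) : max 0 (P.v x - 1) ≤ P.v y := by
  have hvc {i : ℕ} (hi : (i : M) * c i ≠ 0) : P.v ((i : M) * c i) = P.v (c i) := by
    rw [P.map_mul _ _ (left_ne_zero_of_mul hi) (right_ne_zero_of_mul hi),
      P.v_natCast (left_ne_zero_of_mul hi), zero_add]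
  obtain ⟨j, -, -, hvx_eq, hmin⟩ := P.exists_v_sum_mul_pow_eq p hπ0 hπ hc (hx ▸ hx0)
  obtain ⟨k, hk, hck, hvy_eq, -⟩ := P.exists_v_sum_mul_pow_eq p hπ0 hπ
    (c := fun i => (i : M) * c i) (fun i hi hci => hvc hci ▸ hc i hi (right_ne_zero_of_mul hci))
    (hy ▸ mul_ne_zero hπ0 hy0)
  have hk0 : k ≠ 0 := by rintro rfl; simp at hck
  have hjk := hmin k hk (right_ne_zero_of_mul hck)
  rw [← hx] at hvx_eq
  rw [← hy, P.map_mul _ _ hπ0 hy0, hπ, hvc hck] at hvy_eq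
  -- as `p ∣ v (c k)`, `k < p` and `0 ≤ v x ≤ v (c k) + k`
  have hck0 : 0 ≤ P.v (c k) := by
    by_contra! h
    have := Int.le_of_dvd (neg_pos.2 h) (Int.dvd_neg.2 (hc k hk (right_ne_zero_of_mul hck)))
    omega
  omega

variable {t : M}

theorem v_sub_algebraMap_nonneg (ht : Transcendental F t) (hPt : 0 ≤ P.v t) (b : F) :
    0 ≤ P.v (t - algebraMap F M b) := by
  rcases eq_or_ne b 0 with rfl | hb
  · simpa using hPt
  have := P.add_min t (algebraMap F M (-b)) (by simpa using ht.sub_algebraMap_ne_zero 0)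
    (by simpa using hb) (by simpa [sub_eq_add_neg] using ht.sub_algebraMap_ne_zero b)
  rw [P.triv _ (neg_ne_zero.2 hb), map_neg, ← sub_eq_add_neg] at this
  omega

theorem v_sub_algebraMap_eq_zero (ht : Transcendental F t) {b c : F}
    (hb : 0 < P.v (t - algebraMap F M b)) (hc : c ≠ b) : P.v (t - algebraMap F M c) = 0 := by
  have hbc : algebraMap F M (b - c) ≠ 0 := by simpa [sub_eq_zero] using hc.symm
  have hv : P.v (algebraMap F M (b - c)) = 0 := P.triv _ (sub_ne_zero.2 hc.symm)
  have := P.v_add_eq_min_of_ne hbc (ht.sub_algebraMap_ne_zero b) (by omega)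
  rw [map_sub] at hv
  rw [map_sub, sub_add_sub_cancel', hv] at this
  omega

variable [IsAlgClosed F]

theorem v_aeval [DecidableEq F] (ht : Transcendental F t) {f : F[X]} (hf : f ≠ 0) {b : F}
    (hb : ∀ c ≠ b, P.v (t - algebraMap F M c) = 0) :
    P.v (aeval t f) = f.roots.count b * P.v (t - algebraMap F M b) := by
  have hprod : aeval t f =
      algebraMap F M f.leadingCoeff * (f.roots.map fun c => t - algebraMap F M c).prod := by
    conv_lhs => rw [(IsAlgClosed.splits f).eq_prod_roots]
    simp [map_multiset_prod, Multiset.map_map]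
  have hlc : f.leadingCoeff ≠ 0 := leadingCoeff_ne_zero.2 hf
  have hroots : ∀ x ∈ f.roots.map fun c => t - algebraMap F M c, x ≠ 0 := by
    simp only [Multiset.mem_map]
    rintro _ ⟨c, -, rfl⟩
    exact ht.sub_algebraMap_ne_zero c
  rw [hprod, P.map_mul _ _ (by simpa using hlc) (Multiset.prod_ne_zero fun h => hroots 0 h rfl),
    P.triv _ hlc, P.v_multiset_prod hroots, Multiset.map_map, zero_add,
    Multiset.sum_map_eq_nsmul_single (f := P.v ∘ _) b fun c hc _ => hb c hc, nsmul_eq_mul,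
    Function.comp_apply]

theorem exists_v_sub_algebraMap_eq_one (ht : Transcendental F t) (hunr : P.UnramifiedOver t)
    (hPt : 0 ≤ P.v t) : ∃ a : F, P.v (t - algebraMap F M a) = 1 := by
  classical
  obtain ⟨r, hr, hr0, hr1⟩ := hunr
  obtain ⟨f, g, rfl⟩ := (IntermediateField.mem_adjoin_simple_iff F r).1 hr
  have hf : f ≠ 0 := by rintro rfl; simp at hr0
  have hg : g ≠ 0 := by rintro rfl; simp at hr0
  rw [P.v_div (fun h => ht ⟨f, hf, h⟩) (fun h => ht ⟨g, hg, h⟩)] at hr1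
  obtain ⟨b, hb⟩ : ∃ b, P.v (t - algebraMap F M b) ≠ 0 := by
    by_contra! h
    rw [P.v_aeval ht hf (b := 0) fun c _ => h c, P.v_aeval ht hg (b := 0) fun c _ => h c,
      h 0] at hr1
    simp at hr1
  have hpos := (P.v_sub_algebraMap_nonneg ht hPt b).lt_of_ne' hb
  have hothers c (hc : c ≠ b) := P.v_sub_algebraMap_eq_zero ht hpos hc
  rw [P.v_aeval ht hf hothers, P.v_aeval ht hg hothers, ← sub_mul] at hr1
  exact ⟨b, Int.eq_one_of_mul_eq_one_left (P.v_sub_algebraMap_nonneg ht hPt b) hr1⟩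

end FFPrime

/-- Let `F` be algebraically closed of characteristic `p > 0`, `M` a function field
over `F`, and `t ∈ M` transcendental over `F` and not a `p`-th power in `M`. Let `D`
be the `F`-linear derivation of `M` with `D t = 1`. If `P` is a prime of `M` unramified
over `F(t)` which is not a pole of `t`, then for every `x ∈ M` integral at `P` with
`D x ≠ 0` one has `P.v (D x) ≥ max 0 (P.v x - 1)`. -/
theorem stmt_19 {F M : Type*} [Field F] [Field M] [Algebra F M] [IsAlgClosed F]
    (p : ℕ) (hp : p.Prime) [CharP F p]
    (t : M) (htrans : Transcendental F t)
    (hfin : FiniteDimensional (IntermediateField.adjoin F {t}) M)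
    (hnp : ¬∃ c : M, c ^ p = t)
    (D : M → M)
    (hDadd : ∀ x y : M, D (x + y) = D x + D y)
    (hDlin : ∀ (c : F) (x : M), D (algebraMap F M c * x) = algebraMap F M c * D x)
    (hDmul : ∀ x y : M, D (x * y) = x * D y + y * D x)
    (hDt : D t = 1)
    (P : FFPrime F M) (hunr : P.UnramifiedOver t) (hPt : 0 ≤ P.v t) :
    ∀ x : M, 0 ≤ P.v x → D x ≠ 0 → max 0 (P.v x - 1) ≤ P.v (D x) := by
  intro x hvx hDx
  have : Fact p.Prime := ⟨hp⟩
  have : CharP M p := charP_of_injective_algebraMap (algebraMap F M).injective p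
  let δ : Derivation F M M := derivationOfLeibniz D hDadd hDlin hDmul
  obtain ⟨a, hπ⟩ := P.exists_v_sub_algebraMap_eq_one htrans hunr hPt
  set π := t - algebraMap F M a
  have hπ0 : π ≠ 0 := htrans.sub_algebraMap_ne_zero a
  have hδπ : δ π = 1 := by rw [map_sub, δ.map_algebraMap, sub_zero]; exact hDt
  obtain ⟨w, hx⟩ := exists_eq_sum_pow_mul_pow p (finrank_fieldRange_frobenius p F hnp)
    (not_exists_pow_eq_sub_algebraMap p hnp a) x
  refine P.max_le_v_of_mul_eq_sum p hπ0 hπ (c := fun i => w i ^ p)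
    (fun i _ hi => ⟨_, P.v_pow (ne_zero_pow hp.ne_zero hi) p⟩) hx ?_
    (by rintro rfl; exact hDx δ.map_zero) hDx hvx
  rw [hx]
  exact δ.mul_map_sum_mul_pow hδπ (Finset.range p) fun i _ => δ.map_pow_char p (w i)
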